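/- arXiv:1007.1671 — 2 statements merged into one kernel-verified Lean document; each statement's English description precedes it below -/
import Mathlib

section
/- Let V be a finite-dimensional vector space over a field k of characteristic zero. The map T^c(V) → S(V) given by first applying exp (multiplication by 1/k! on V^{⊗k}) and then projecting v₁⊗⋯⊗v_k ↦ v₁⋯v_k is a homomorphism of commutative rings, where T^c(V) carries the shuffle product. -/
noncomputable section

/-- The set of `(p,q)`-shuffles, as permutations of `Fin (p + q)` which are strictly
increasing on the first `p` and on the last `q` indices. -/
def shuffleSet (p q : ℕ) : Finset (Equiv.Perm (Fin (p + q))) :=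
  Finset.univ.filter (fun σ =>
    (∀ i j : Fin p, i < j → σ (Fin.castAdd q i) < σ (Fin.castAdd q j)) ∧
    (∀ i j : Fin q, i < j → σ (Fin.natAdd p i) < σ (Fin.natAdd p j)))

/-- The word `v₁ ⊗ v₂ ⊗ ⋯ ⊗ vₙ`, as an element of degree `n` of the tensor algebra
(whose underlying graded module is `T(V) = Tᶜ(V) = ⊕ₖ V^{⊗k}`). -/
def tensorWord {k V : Type*} [CommRing k] [AddCommGroup V] [Module k V]
    {n : ℕ} (v : Fin n → V) : TensorAlgebra k V :=
  (List.ofFn fun i => TensorAlgebra.ι k (v i)).prod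

/-- The symmetric algebra `S(V)`, as the quotient of the tensor algebra by the
relations `x ⊗ y = y ⊗ x`. -/
def SymmetricAlg (K V : Type*) [Field K] [AddCommGroup V] [Module K V] : Type _ :=
  RingQuot (fun a b : TensorAlgebra K V =>
    ∃ x y : V, a = TensorAlgebra.ι K x * TensorAlgebra.ι K y ∧
      b = TensorAlgebra.ι K y * TensorAlgebra.ι K x)

instance (K V : Type*) [Field K] [AddCommGroup V] [Module K V] :
    Ring (SymmetricAlg K V) := by
  unfold SymmetricAlg; infer_instance

instance (K V : Type*) [Field K] [AddCommGroup V] [Module K V] :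
    Algebra K (SymmetricAlg K V) := by
  unfold SymmetricAlg; infer_instance

/-- The natural projection `T(V) → S(V)`. -/
def symmetricAlgProj (K V : Type*) [Field K] [AddCommGroup V] [Module K V] :
    TensorAlgebra K V →ₐ[K] SymmetricAlg K V :=
  RingQuot.mkAlgHom K _


section Aux
lemma castAdd_injective (p q : ℕ) : Function.Injective (Fin.castAdd q : Fin p → Fin (p+q)) :=
  fun i j h => Fin.ext (by simpa using congrArg Fin.val h)

/-- the permutation associated to a subset of card p -/
def backPerm {p q : ℕ} (s : Finset (Fin (p+q))) (hs : s.card = p) (hsc : sᶜ.card = q) :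
    Equiv.Perm (Fin (p+q)) :=
  finSumFinEquiv.symm.trans ((Equiv.sumCongr ((s.orderIsoOfFin hs).toEquiv)
    (((sᶜ.orderIsoOfFin hsc).toEquiv).trans
      (Equiv.subtypeEquivRight (fun x => Finset.mem_compl)))).trans
    (Equiv.sumCompl (· ∈ s)))

lemma backPerm_castAdd {p q : ℕ} (s : Finset (Fin (p+q))) (hs : s.card = p)
    (hsc : sᶜ.card = q) (i : Fin p) :
    backPerm s hs hsc (Fin.castAdd q i) = s.orderEmbOfFin hs i := by
  simp [backPerm, Equiv.trans_apply, finSumFinEquiv_symm_apply_castAdd]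

lemma backPerm_natAdd {p q : ℕ} (s : Finset (Fin (p+q))) (hs : s.card = p)
    (hsc : sᶜ.card = q) (i : Fin q) :
    backPerm s hs hsc (Fin.natAdd p i) = sᶜ.orderEmbOfFin hsc i := by
  simp [backPerm, Equiv.trans_apply, finSumFinEquiv_symm_apply_natAdd]

lemma card_shuffleSet (p q : ℕ) : (shuffleSet p q).card = (p + q).choose p := by
  have hinj : ∀ σ : Equiv.Perm (Fin (p+q)),
      Function.Injective (fun i : Fin p => σ (Fin.castAdd q i)) :=
    fun σ i j h => castAdd_injective p q (σ.injective h)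
  have hcompl : ∀ s : Finset (Fin (p+q)), s.card = p → sᶜ.card = q := by
    intro s hs
    rw [Finset.card_compl, hs, Fintype.card_fin, Nat.add_sub_cancel_left]
  have hpc := Finset.card_powersetCard p (Finset.univ : Finset (Fin (p+q)))
  rw [Finset.card_univ, Fintype.card_fin] at hpc
  rw [← hpc]
  refine Finset.card_bij'
    (fun σ _ => Finset.image (fun i => σ (Fin.castAdd q i)) Finset.univ)
    (fun s hsmem => by
      have hs : s.card = p := (Finset.mem_powersetCard.mp hsmem).2
      exact backPerm s hs (hcompl s hs)) ?_ ?_ ?_ ?_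
  · intro σ _
    rw [Finset.mem_powersetCard]
    refine ⟨Finset.subset_univ _, ?_⟩
    rw [Finset.card_image_of_injective _ (hinj σ), Finset.card_univ, Fintype.card_fin]
  · intro s hsmem
    have hs : s.card = p := (Finset.mem_powersetCard.mp hsmem).2
    rw [shuffleSet, Finset.mem_filter]
    refine ⟨Finset.mem_univ _, fun i j hij => ?_, fun i j hij => ?_⟩
    · rw [backPerm_castAdd, backPerm_castAdd]
      exact (s.orderEmbOfFin hs).strictMono hij
    · rw [backPerm_natAdd, backPerm_natAdd]
      exact (sᶜ.orderEmbOfFin _).strictMono hij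
  · -- back (forward σ) = σ
    intro σ hσ
    rw [shuffleSet, Finset.mem_filter] at hσ
    obtain ⟨-, h1, h2⟩ := hσ
    set s := Finset.image (fun i => σ (Fin.castAdd q i)) Finset.univ with hsdef
    have hs : s.card = p := by
      rw [hsdef, Finset.card_image_of_injective _ (hinj σ), Finset.card_univ, Fintype.card_fin]
    have hc : ∀ i, σ (Fin.castAdd q i) ∈ s := fun i =>
      Finset.mem_image.mpr ⟨i, Finset.mem_univ _, rfl⟩
    have hmono1 : StrictMono (fun i => σ (Fin.castAdd q i)) := fun i j hij => h1 i j hij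
    have heq1 : (fun i => σ (Fin.castAdd q i)) = ⇑(s.orderEmbOfFin hs) :=
      Finset.orderEmbOfFin_unique hs hc hmono1
    have hn : ∀ i, σ (Fin.natAdd p i) ∈ sᶜ := by
      intro i
      rw [Finset.mem_compl]
      intro hmem
      obtain ⟨j, -, hj⟩ := Finset.mem_image.mp hmem
      have := σ.injective hj
      have hval : (Fin.castAdd q j).val = (Fin.natAdd p i).val := congrArg Fin.val this
      simp only [Fin.coe_castAdd, Fin.coe_natAdd] at hval
      omega
    have hmono2 : StrictMono (fun i => σ (Fin.natAdd p i)) := fun i j hij => h2 i j hij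
    have heq2 : (fun i => σ (Fin.natAdd p i)) = ⇑(sᶜ.orderEmbOfFin (hcompl s hs)) :=
      Finset.orderEmbOfFin_unique (hcompl s hs) hn hmono2
    ext j
    refine Fin.addCases (fun i => ?_) (fun i => ?_) j
    · rw [backPerm_castAdd, ← heq1]
    · rw [backPerm_natAdd, ← heq2]
  · -- forward (back s) = s
    intro s hsmem
    have hs : s.card = p := (Finset.mem_powersetCard.mp hsmem).2
    apply Finset.coe_injective
    rw [Finset.coe_image, Finset.coe_univ, Set.image_univ]
    have : (fun i => backPerm s hs (hcompl s hs) (Fin.castAdd q i)) = ⇑(s.orderEmbOfFin hs) := by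
      funext i; exact backPerm_castAdd _ _ _ _
    rw [show (fun i => backPerm s hs (hcompl s hs) (Fin.castAdd q i)) = ⇑(s.orderEmbOfFin hs)
      from this]
    exact Finset.range_orderEmbOfFin s hs

variable (K V : Type*) [Field K] [AddCommGroup V] [Module K V]

lemma proj_comm (a b : V) :
    Commute (symmetricAlgProj K V (TensorAlgebra.ι K a))
      (symmetricAlgProj K V (TensorAlgebra.ι K b)) := by
  unfold Commute SemiconjBy
  rw [← map_mul (symmetricAlgProj K V), ← map_mul (symmetricAlgProj K V)]
  exact RingQuot.mkAlgHom_rel K ⟨a, b, rfl, rfl⟩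

lemma ofFn_perm {n : ℕ} {α : Type*} (g : Fin n → α) (σ : Equiv.Perm (Fin n)) :
    (List.ofFn (g ∘ ⇑σ)).Perm (List.ofFn g) := by
  have h : (List.ofFn ⇑σ).Perm (List.finRange n) := by
    rw [← Multiset.coe_eq_coe]
    have h1 : (↑(List.ofFn ⇑σ) : Multiset (Fin n)) = Multiset.map ⇑σ ↑(List.finRange n) := by
      simp [List.ofFn_eq_map]
    rw [h1]
    calc Multiset.map ⇑σ (Finset.univ : Finset (Fin n)).val
        = (Finset.univ.map (σ.toEmbedding)).val := rfl
      _ = Finset.univ.val := by rw [Finset.map_univ_equiv]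
  have := h.map g
  simpa [List.map_ofFn, List.ofFn_eq_map] using this

lemma proj_word_perm {n : ℕ} (v : Fin n → V) (σ : Equiv.Perm (Fin n)) :
    symmetricAlgProj K V (tensorWord (k := K) (fun i => v (σ i))) =
      symmetricAlgProj K V (tensorWord (k := K) v) := by
  unfold tensorWord
  rw [map_list_prod, map_list_prod]
  have h1 : List.map (⇑(symmetricAlgProj K V)) (List.ofFn fun i => TensorAlgebra.ι K (v (σ i)))
      = List.ofFn ((fun i => symmetricAlgProj K V (TensorAlgebra.ι K (v i))) ∘ ⇑σ) := by
    simp [List.map_ofFn]; rfl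
  have h2 : List.map (⇑(symmetricAlgProj K V)) (List.ofFn fun i => TensorAlgebra.ι K (v i))
      = List.ofFn (fun i => symmetricAlgProj K V (TensorAlgebra.ι K (v i))) := by
    simp [List.map_ofFn]; rfl
  rw [h1, h2]
  refine List.Perm.prod_eq' (ofFn_perm _ σ) ?_
  rw [List.pairwise_ofFn]
  intro i j _
  exact proj_comm K V _ _

lemma proj_word_append {p q : ℕ} (x : Fin p → V) (y : Fin q → V) :
    symmetricAlgProj K V (tensorWord (k := K) (Fin.append x y)) =
      symmetricAlgProj K V (tensorWord (k := K) x) *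
      symmetricAlgProj K V (tensorWord (k := K) y) := by
  unfold tensorWord
  have h : (fun i => TensorAlgebra.ι K (Fin.append x y i)) =
      Fin.append (fun i => TensorAlgebra.ι K (x i)) (fun i => TensorAlgebra.ι K (y i)) := by
    funext i
    refine Fin.addCases (fun j => ?_) (fun j => ?_) i <;>
      simp [Fin.append_left, Fin.append_right]
  rw [h, List.ofFn_fin_append, List.prod_append, map_mul]

end Aux

/-- Let `V` be a finite-dimensional vector space over a field `K` of
characteristic zero.  The map `Tᶜ(V) → S(V)` given by first applying `exp`
(multiplication by `1/k!` on `V^{⊗k}`) and then projecting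
`v₁ ⊗ ⋯ ⊗ v_k ↦ v₁ ⋯ v_k` is a homomorphism of commutative rings, where `Tᶜ(V)`
carries the shuffle product.  (Multiplicativity is stated on the words, which span
`Tᶜ(V)`; the map preserves the unit.) -/
theorem exp_proj_is_ring_hom_for_shuffle
    (K V : Type*) [Field K] [CharZero K] [AddCommGroup V] [Module K V]
    [FiniteDimensional K V] :
    (∀ (p q : ℕ) (x : Fin p → V) (y : Fin q → V),
      symmetricAlgProj K V (((p + q).factorial : K)⁻¹ •
          ∑ σ ∈ shuffleSet p q, tensorWord (k := K) (fun i => Fin.append x y (σ.symm i))) =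
        symmetricAlgProj K V ((p.factorial : K)⁻¹ • tensorWord (k := K) x) *
        symmetricAlgProj K V ((q.factorial : K)⁻¹ • tensorWord (k := K) y)) ∧
    symmetricAlgProj K V 1 = 1 := by
  constructor
  · intro p q x y
    have hterm : ∀ σ ∈ shuffleSet p q,
        symmetricAlgProj K V (tensorWord (k := K) (fun i => Fin.append x y (σ.symm i))) =
          symmetricAlgProj K V (tensorWord (k := K) x) *
          symmetricAlgProj K V (tensorWord (k := K) y) := by
      intro σ _
      rw [proj_word_perm K V (Fin.append x y) σ.symm]
      exact proj_word_append K V x y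
    rw [map_smul, map_sum, Finset.sum_congr rfl hterm, Finset.sum_const, card_shuffleSet,
      map_smul, map_smul, smul_mul_smul_comm, ← Nat.cast_smul_eq_nsmul K, smul_smul]
    congr 1
    have hid := Nat.choose_mul_factorial_mul_factorial (Nat.le_add_right p q)
    rw [Nat.add_sub_cancel_left] at hid
    have hidK : ((p + q).choose p : K) * (p.factorial : K) * (q.factorial : K) =
        ((p + q).factorial : K) := by exact_mod_cast congrArg Nat.cast hid
    have hp : (p.factorial : K) ≠ 0 := Nat.cast_ne_zero.mpr p.factorial_ne_zero
    have hq : (q.factorial : K) ≠ 0 := Nat.cast_ne_zero.mpr q.factorial_ne_zero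
    have hpq : ((p + q).factorial : K) ≠ 0 := Nat.cast_ne_zero.mpr (p + q).factorial_ne_zero
    field_simp
    linear_combination hidK
  · exact map_one _


end
end

section
/- Let R be a commutative ring, F a finitely generated free R-module of rank n, and s: F → R an R-linear map (a 'section' of F^∨) such that the images s(e₁),…,s(e_n) of a basis form a regular sequence in R. Then the Koszul complex ⋯ → Λ²F → F → R with differentials given by contraction with s is exact except in degree 0, where its cohomology is R/(im s). -/
noncomputable section

/-- Contraction with a linear functional `s ∈ F^∨`, as the Koszul differential on the
exterior algebra `Λ•F`; on generators it is given by
`f₁ ∧ ⋯ ∧ f_k ↦ ∑ᵢ (-1)^{i+1} s(fᵢ) f₁ ∧ ⋯ ∧ f̂ᵢ ∧ ⋯ ∧ f_k` (it is homogeneous of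
degree `-1`, with components `Λ^k F → Λ^{k-1} F`). -/
def koszulContraction (R F : Type*) [CommRing R] [AddCommGroup F] [Module R F]
    (s : Module.Dual R F) : ExteriorAlgebra R F →ₗ[R] ExteriorAlgebra R F :=
  CliffordAlgebra.contractLeft (Q := (0 : QuadraticForm R F)) s

namespace KoszulAux

universe u v

variable {R : Type*} [CommRing R] {F : Type*} [AddCommGroup F] [Module R F]
variable {F' : Type*} [AddCommGroup F'] [Module R F']

lemma kc_ι_mul (s : Module.Dual R F) (v : F) (x : ExteriorAlgebra R F) :
    koszulContraction R F s (ExteriorAlgebra.ι R v * x)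
      = s v • x - ExteriorAlgebra.ι R v * koszulContraction R F s x :=
  CliffordAlgebra.contractLeft_ι_mul _ _ _

lemma kc_ι (s : Module.Dual R F) (v : F) :
    koszulContraction R F s (ExteriorAlgebra.ι R v) = algebraMap R _ (s v) :=
  CliffordAlgebra.contractLeft_ι _ _ _

lemma kc_algebraMap (s : Module.Dual R F) (r : R) :
    koszulContraction R F s (algebraMap R _ r) = 0 :=
  CliffordAlgebra.contractLeft_algebraMap _ _ _

lemma kc_kc (s : Module.Dual R F) (x : ExteriorAlgebra R F) :
    koszulContraction R F s (koszulContraction R F s x) = 0 :=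
  CliffordAlgebra.contractLeft_contractLeft _ _

lemma counit_kc_mem_range (s : Module.Dual R F) (y : ExteriorAlgebra R F) :
    ExteriorAlgebra.algebraMapInv (koszulContraction R F s y) ∈ LinearMap.range s := by
  induction y using CliffordAlgebra.left_induction with
  | algebraMap r => rw [kc_algebraMap]; simp
  | add x y hx hy => rw [map_add, map_add]; exact add_mem hx hy
  | ι_mul x m hx =>
      rw [kc_ι_mul, map_sub, map_smul, map_mul]
      have h0 : (ExteriorAlgebra.algebraMapInv (ExteriorAlgebra.ι R m) : R) = 0 := by
        simp [ExteriorAlgebra.algebraMapInv]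
      rw [h0, zero_mul, sub_zero, smul_eq_mul, mul_comm, ← smul_eq_mul]
      exact Submodule.smul_mem _ _ ⟨m, rfl⟩

lemma algebraMap_mem_range_kc_iff (s : Module.Dual R F) (r : R) :
    algebraMap R (ExteriorAlgebra R F) r ∈ LinearMap.range (koszulContraction R F s) ↔
      r ∈ LinearMap.range s := by
  constructor
  · rintro ⟨y, hy⟩
    have h := counit_kc_mem_range s y
    rw [hy, ExteriorAlgebra.algebraMap_leftInverse F r] at h
    exact h
  · rintro ⟨v, rfl⟩
    exact ⟨ExteriorAlgebra.ι R v, kc_ι s v⟩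

lemma range_dual_eq_span {n : ℕ} (b : Module.Basis (Fin n) R F) (s : Module.Dual R F) :
    (LinearMap.range s : Submodule R R) = Ideal.span (Set.range fun i => s (b i)) := by
  rw [← Ideal.submodule_span_eq, LinearMap.range_eq_map, ← b.span_eq, Submodule.map_span,
    ← Set.range_comp]
  rfl


lemma kc_map (s : Module.Dual R F) (f : F' →ₗ[R] F) (x : ExteriorAlgebra R F') :
    koszulContraction R F s (ExteriorAlgebra.map f x)
      = ExteriorAlgebra.map f (koszulContraction R F' (s ∘ₗ f) x) := by
  induction x using CliffordAlgebra.left_induction with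
  | algebraMap r => rw [AlgHom.commutes, kc_algebraMap, kc_algebraMap, map_zero]
  | add x y hx hy => rw [map_add, map_add, map_add, map_add, hx, hy]
  | ι_mul x m hx =>
      rw [map_mul, ExteriorAlgebra.map_apply_ι, kc_ι_mul, kc_ι_mul, map_sub, map_smul,
        map_mul, ExteriorAlgebra.map_apply_ι, hx]
      rfl

/-- Left multiplication by `ι w` twists elements of the image of `ExteriorAlgebra.map f`
by the grade involution. -/
lemma ι_mul_map (f : F' →ₗ[R] F) (w : F) (x : ExteriorAlgebra R F') :
    ExteriorAlgebra.ι R w * ExteriorAlgebra.map f x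
      = ExteriorAlgebra.map f (CliffordAlgebra.involute x) * ExteriorAlgebra.ι R w := by
  induction x using CliffordAlgebra.induction with
  | algebraMap r => simp [Algebra.commutes]
  | ι m =>
      rw [ExteriorAlgebra.map_apply_ι, CliffordAlgebra.involute_ι, map_neg,
        ExteriorAlgebra.map_apply_ι, neg_mul]
      exact eq_neg_of_add_eq_zero_right (ExteriorAlgebra.ι_add_mul_swap (f m) w)
  | mul x y hx hy =>
      simp only [map_mul]
      rw [← mul_assoc, hx, mul_assoc, hy, ← mul_assoc]
  | add x y hx hy => rw [map_add, map_add, map_add, mul_add, add_mul, hx, hy]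

/-- Existence of the decomposition `x = a + ι w * z` with `a, z` coming from `F'`. -/
lemma decomp (f : F' →ₗ[R] F) (w : F)
    (hw : ∀ v : F, ∃ (v' : F') (r : R), v = f v' + r • w) (x : ExteriorAlgebra R F) :
    ∃ a z : ExteriorAlgebra R F',
      x = ExteriorAlgebra.map f a + ExteriorAlgebra.ι R w * ExteriorAlgebra.map f z := by
  induction x using CliffordAlgebra.induction with
  | algebraMap r => exact ⟨algebraMap R _ r, 0, by simp⟩
  | ι v =>
      obtain ⟨v', r, hv⟩ := hw v
      refine ⟨ExteriorAlgebra.ι R v', algebraMap R _ r, ?_⟩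
      rw [hv, map_add, map_smul, ExteriorAlgebra.map_apply_ι, AlgHom.commutes,
        ← Algebra.commutes, ← Algebra.smul_def]
  | add x y hx hy =>
      obtain ⟨a₁, z₁, rfl⟩ := hx
      obtain ⟨a₂, z₂, rfl⟩ := hy
      exact ⟨a₁ + a₂, z₁ + z₂, by rw [map_add, map_add, mul_add]; abel⟩
  | mul x y hx hy =>
      obtain ⟨a₁, z₁, rfl⟩ := hx
      obtain ⟨a₂, z₂, rfl⟩ := hy
      refine ⟨a₁ * a₂, CliffordAlgebra.involute a₁ * z₂ + z₁ * a₂, ?_⟩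
      have key := ι_mul_map f w (CliffordAlgebra.involute a₁)
      rw [CliffordAlgebra.involute_involute] at key
      have h1 : ExteriorAlgebra.map f a₁ * (ExteriorAlgebra.ι R w * ExteriorAlgebra.map f z₂)
          = ExteriorAlgebra.ι R w *
              ExteriorAlgebra.map f (CliffordAlgebra.involute a₁ * z₂) := by
        rw [← mul_assoc, ← key, mul_assoc, ← map_mul]
      have h2 : ExteriorAlgebra.ι R w * ExteriorAlgebra.map f z₁ *
            (ExteriorAlgebra.ι R w * ExteriorAlgebra.map f z₂) = 0 := by
        rw [ι_mul_map f w z₁, mul_assoc, ← mul_assoc (ExteriorAlgebra.ι R w),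
          ExteriorAlgebra.ι_sq_zero, zero_mul, mul_zero]
      rw [add_mul, mul_add, mul_add, h1, h2, add_zero]
      simp only [map_mul, map_add, mul_add, mul_assoc]
      abel

/-- Uniqueness: if `map f a + ι w * map f z = 0` (with a retraction `q` of `f` and a dual
vector `δ` vanishing on the image of `f` with `δ w = 1`), then `a = 0` and `z = 0`. -/
lemma decomp_unique (f : F' →ₗ[R] F) (q : F →ₗ[R] F') (hq : q ∘ₗ f = LinearMap.id)
    (δ : Module.Dual R F) (hδf : δ ∘ₗ f = 0) (w : F) (hδw : δ w = 1)
    (a z : ExteriorAlgebra R F')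
    (h : ExteriorAlgebra.map f a + ExteriorAlgebra.ι R w * ExteriorAlgebra.map f z = 0) :
    a = 0 ∧ z = 0 := by
  have hinj : Function.Injective (ExteriorAlgebra.map (R := R) f) := by
    intro x y hxy
    have := congrArg (ExteriorAlgebra.map q) hxy
    rwa [← AlgHom.comp_apply, ← AlgHom.comp_apply, ExteriorAlgebra.map_comp_map, hq,
      ExteriorAlgebra.map_id, AlgHom.id_apply, AlgHom.id_apply] at this
  have hkill : ∀ y : ExteriorAlgebra R F',
      koszulContraction R F δ (ExteriorAlgebra.map f y) = 0 := by
    intro y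
    rw [kc_map δ f y, hδf]
    have : koszulContraction R F' (0 : Module.Dual R F') = 0 :=
      map_zero (CliffordAlgebra.contractLeft (Q := (0 : QuadraticForm R F')))
    rw [this, LinearMap.zero_apply, map_zero]
  have h2 := congrArg (koszulContraction R F δ) h
  rw [map_zero, map_add, hkill a, kc_ι_mul, hkill z, mul_zero, sub_zero, hδw, one_smul,
    zero_add] at h2
  have hz : z = 0 := hinj (by rw [h2, map_zero])
  refine ⟨hinj ?_, hz⟩
  rw [hz, map_zero, mul_zero, add_zero] at h
  rw [h, map_zero]


lemma ideal_smul_top (I : Ideal R) : (I • ⊤ : Submodule R R) = I := by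
  rw [smul_eq_mul, Ideal.mul_top]

lemma ofList_ofFn {m : ℕ} (g : Fin m → R) :
    Ideal.ofList (List.ofFn g) = Ideal.span (Set.range g) := by
  have h : {r : R | r ∈ List.ofFn g} = Set.range g := by
    ext r
    simp [List.mem_ofFn, eq_comm]
  rw [Ideal.ofList, h]

lemma ofFn_succ_eq {α : Type*} {n : ℕ} (g : Fin (n + 1) → α) :
    List.ofFn g = (List.ofFn fun i : Fin n => g i.castSucc) ++ [g (Fin.last n)] := by
  rw [List.ofFn_succ', List.concat_eq_append]

/-- Splitting off the last element of a regular sequence. -/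
lemma regular_split {n : ℕ} (g : Fin (n + 1) → R)
    (hreg : RingTheory.Sequence.IsRegular R (List.ofFn g)) :
    RingTheory.Sequence.IsRegular R (List.ofFn fun i : Fin n => g i.castSucc) ∧
      (∀ r : R, g (Fin.last n) * r ∈ Ideal.ofList (List.ofFn fun i : Fin n => g i.castSucc) →
        r ∈ Ideal.ofList (List.ofFn fun i : Fin n => g i.castSucc)) := by
  set L' : List R := List.ofFn fun i : Fin n => g i.castSucc with hL'
  set sN : R := g (Fin.last n)
  have hofn : List.ofFn g = L' ++ [sN] := ofFn_succ_eq g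
  have hwk := hreg.toIsWeaklyRegular
  rw [hofn, RingTheory.Sequence.isWeaklyRegular_append_iff] at hwk
  obtain ⟨hw1, hw2⟩ := hwk
  have hne := hreg.top_ne_smul
  rw [hofn, ideal_smul_top] at hne
  have hne' : Ideal.ofList L' ≠ ⊤ := by
    intro h
    apply hne
    rw [Ideal.ofList_append, h]
    exact (top_sup_eq _).symm
  constructor
  · exact ⟨hw1, by rw [ideal_smul_top]; exact fun h => hne' h.symm⟩
  · rw [RingTheory.Sequence.isWeaklyRegular_singleton_iff] at hw2
    intro r hr
    have hmem : ∀ x : R, x ∈ (Ideal.ofList L' • ⊤ : Submodule R R) ↔ x ∈ Ideal.ofList L' :=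
      fun x => by rw [ideal_smul_top]
    have h0 : sN • (Submodule.Quotient.mk r :
        R ⧸ (Ideal.ofList L' • ⊤ : Submodule R R)) = sN • (0 : _) := by
      rw [smul_zero, ← Submodule.Quotient.mk_smul, Submodule.Quotient.mk_eq_zero]
      exact (hmem _).mpr (by rwa [smul_eq_mul])
    have := hw2 h0
    rw [Submodule.Quotient.mk_eq_zero] at this
    exact (hmem r).mp this


set_option maxHeartbeats 1000000 in
theorem koszul_ker_le {R : Type u} [CommRing R] :
    ∀ (n : ℕ) {F : Type v} [AddCommGroup F] [Module R F] (b : Module.Basis (Fin n) R F)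
      (s : Module.Dual R F),
      RingTheory.Sequence.IsRegular R (List.ofFn fun i => s (b i)) →
      LinearMap.ker (koszulContraction R F s) ≤
        LinearMap.range (koszulContraction R F s) ⊔
          LinearMap.range (Algebra.linearMap R (ExteriorAlgebra R F)) := by
  intro n
  induction n with
  | zero =>
    intro F _ _ b s _ x _
    haveI : Subsingleton F := b.repr.toEquiv.subsingleton
    have hall : ∀ y : ExteriorAlgebra R F,
        ∃ r : R, algebraMap R (ExteriorAlgebra R F) r = y := by
      intro y
      induction y using CliffordAlgebra.induction with
      | algebraMap r => exact ⟨r, rfl⟩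
      | ι v => exact ⟨0, by rw [Subsingleton.elim v 0, map_zero, map_zero]⟩
      | mul x y hx hy =>
          obtain ⟨r₁, rfl⟩ := hx; obtain ⟨r₂, rfl⟩ := hy
          exact ⟨r₁ * r₂, by rw [map_mul]⟩
      | add x y hx hy =>
          obtain ⟨r₁, rfl⟩ := hx; obtain ⟨r₂, rfl⟩ := hy
          exact ⟨r₁ + r₂, by rw [map_add]⟩
    obtain ⟨r, hr⟩ := hall x
    exact Submodule.mem_sup_right ⟨r, hr⟩
  | succ n IH =>
    intro F _ _ b s hreg x hx
    -- ## setup: split off the last basis vector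
    set v' : Fin n → F := fun i => b i.castSucc with hv'def
    have hli : LinearIndependent R v' := b.linearIndependent.comp _ (Fin.castSucc_injective n)
    set F' : Submodule R F := Submodule.span R (Set.range v') with hF'def
    let b' : Module.Basis (Fin n) R F' := Module.Basis.span hli
    set f : F' →ₗ[R] F := F'.subtype with hfdef
    set w : F := b (Fin.last n) with hwdef
    set δ : Module.Dual R F := b.coord (Fin.last n) with hδdef
    set s' : Module.Dual R F' := s ∘ₗ f with hs'def
    set sN : R := s w with hsNdef
    have hδv' : ∀ i, δ (v' i) = 0 := by
      intro i
      rw [hδdef, hv'def]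
      simp only [Module.Basis.coord_apply, Module.Basis.repr_self]
      exact Finsupp.single_eq_of_ne' (Fin.castSucc_lt_last i).ne
    have hδle : F' ≤ LinearMap.ker δ := by
      rw [hF'def, Submodule.span_le]
      rintro _ ⟨i, rfl⟩
      exact LinearMap.mem_ker.mpr (hδv' i)
    have hδf : δ ∘ₗ f = 0 := LinearMap.ext fun y => hδle y.2
    have hδw : δ w = 1 := by
      rw [hδdef, hwdef, Module.Basis.coord_apply, Module.Basis.repr_self]
      simp
    have hgmem : ∀ v : F, v - δ v • w ∈ F' := by
      intro v
      have hv := b.sum_repr v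
      rw [Fin.sum_univ_castSucc] at hv
      have hx2 : v - δ v • w = ∑ i : Fin n, b.repr v i.castSucc • v' i := by
        rw [hδdef, Module.Basis.coord_apply, hwdef]
        nth_rewrite 1 [← hv]
        simp only [hv'def]
        abel
      rw [hx2]
      exact Submodule.sum_mem _ fun i _ =>
        Submodule.smul_mem _ _ (Submodule.subset_span ⟨i, rfl⟩)
    let q : F →ₗ[R] F' := (LinearMap.id - δ.smulRight w).codRestrict F'
      (fun v => by simpa using hgmem v)
    have hqf : q ∘ₗ f = LinearMap.id := by
      apply LinearMap.ext
      intro y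
      apply Subtype.ext
      have h0 : δ (f y) = 0 := hδle y.2
      simp [q, LinearMap.codRestrict, h0]
      rfl
    have hdec : ∀ v : F, ∃ (v'' : F') (r : R), v = f v'' + r • w := by
      intro v
      refine ⟨q v, δ v, ?_⟩
      show v = (v - δ v • w) + δ v • w
      rw [sub_add_cancel]
    have hfb' : ∀ i, f (b' i) = v' i := fun i => congrArg Subtype.val (Module.Basis.span_apply hli i)
    -- ## regular sequence bookkeeping
    obtain ⟨hreg', hSN⟩ := regular_split (fun i => s (b i)) hreg
    have hfun : (fun i => s' (b' i)) = fun i : Fin n => s (b i.castSucc) := by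
      funext i
      rw [hs'def, LinearMap.coe_comp, Function.comp_apply, hfb', hv'def]
    have hreg'' : RingTheory.Sequence.IsRegular R (List.ofFn fun i => s' (b' i)) := by
      rw [hfun]; exact hreg'
    have hrange : (LinearMap.range s' : Submodule R R)
        = Ideal.ofList (List.ofFn fun i : Fin n => s (b i.castSucc)) := by
      rw [range_dual_eq_span b' s', ofList_ofFn, hfun]
    -- ## decompose the cycle x
    obtain ⟨a, z, rfl⟩ := decomp f w hdec x
    rw [LinearMap.mem_ker] at hx
    have hcalc : koszulContraction R F s
        (ExteriorAlgebra.map f a + ExteriorAlgebra.ι R w * ExteriorAlgebra.map f z)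
        = ExteriorAlgebra.map f (koszulContraction R F' s' a + sN • z)
          + ExteriorAlgebra.ι R w *
              ExteriorAlgebra.map f (-(koszulContraction R F' s' z)) := by
      rw [map_add, kc_map s f a, kc_ι_mul, kc_map s f z, ← hs'def]
      simp only [map_add, map_smul, map_neg, mul_neg]
      abel
    rw [hcalc] at hx
    obtain ⟨hxa, hxz⟩ := decomp_unique f q hqf δ hδf w hδw _ _ hx
    rw [neg_eq_zero] at hxz
    -- ## z is a cycle; apply the inductive hypothesis
    have hzmem := IH b' s' hreg'' (LinearMap.mem_ker.mpr hxz)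
    rw [Submodule.mem_sup] at hzmem
    obtain ⟨_, ⟨u, rfl⟩, _, ⟨r₀, rfl⟩, hz⟩ := hzmem
    -- ## identify the scalar part of z using regularity
    have hdu : koszulContraction R ↥F' s' u
        = z - algebraMap R (ExteriorAlgebra R ↥F') r₀ := by
      rw [← hz, Algebra.linearMap_apply, add_sub_cancel_right]
    have h1 : koszulContraction R ↥F' s' (a + sN • u)
        = algebraMap R (ExteriorAlgebra R ↥F') (-(sN * r₀)) := by
      rw [map_add, map_smul, hdu, smul_sub, ← add_sub_assoc, hxa, zero_sub,
        Algebra.smul_def, ← map_mul, ← map_neg]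
    have h2 : sN * r₀ ∈ LinearMap.range s' := by
      have hmem : algebraMap R (ExteriorAlgebra R ↥F') (-(sN * r₀)) ∈
          LinearMap.range (koszulContraction R ↥F' s') := ⟨_, h1⟩
      rw [algebraMap_mem_range_kc_iff] at hmem
      exact neg_mem_iff.mp hmem
    have h3 : r₀ ∈ LinearMap.range s' := by
      rw [hrange] at h2 ⊢
      exact hSN r₀ h2
    obtain ⟨vv, hvv⟩ := h3
    have hz2 : z = koszulContraction R ↥F' s' (u + ExteriorAlgebra.ι R vv) := by
      rw [map_add, kc_ι, hvv, ← hz, Algebra.linearMap_apply]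
    set W : ExteriorAlgebra R ↥F' := u + ExteriorAlgebra.ι R vv with hWdef
    -- ## a + sN • W is a cycle; apply the inductive hypothesis again
    have h4 : koszulContraction R ↥F' s' (a + sN • W) = 0 := by
      rw [map_add, map_smul, ← hz2, hxa]
    have hamem := IH b' s' hreg'' (LinearMap.mem_ker.mpr h4)
    rw [Submodule.mem_sup] at hamem
    obtain ⟨_, ⟨p, rfl⟩, _, ⟨r₁, rfl⟩, hp⟩ := hamem
    -- ## conclude
    have e1 : ExteriorAlgebra.ι R w * ExteriorAlgebra.map f z
        = sN • ExteriorAlgebra.map f W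
          - koszulContraction R F s (ExteriorAlgebra.ι R w * ExteriorAlgebra.map f W) := by
      rw [kc_ι_mul, kc_map s f W, ← hs'def, ← hz2]
      abel
    have ha : ExteriorAlgebra.map f a
        = ExteriorAlgebra.map f (koszulContraction R ↥F' s' p)
            + algebraMap R (ExteriorAlgebra R F) r₁ - sN • ExteriorAlgebra.map f W := by
      have haeq : a = koszulContraction R ↥F' s' p
          + algebraMap R (ExteriorAlgebra R ↥F') r₁ - sN • W := by
        rw [eq_sub_iff_add_eq, ← hp, Algebra.linearMap_apply]
      rw [haeq, map_sub, map_add, map_smul, AlgHom.commutes]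
    rw [Submodule.mem_sup]
    refine ⟨koszulContraction R F s (ExteriorAlgebra.map f p
        - ExteriorAlgebra.ι R w * ExteriorAlgebra.map f W), ⟨_, rfl⟩,
      algebraMap R (ExteriorAlgebra R F) r₁, ⟨r₁, by rw [Algebra.linearMap_apply]⟩, ?_⟩
    rw [map_sub, kc_map s f p, ← hs'def, e1, ha]
    abel

end KoszulAux

/-- Let `R` be a commutative ring, `F` a finitely generated free
`R`-module of rank `n` (with basis `b`), and `s : F → R` an `R`-linear map such that
`s(e₁), …, s(e_n)` is a regular sequence in `R`.  Then the Koszul complex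
`⋯ → Λ²F → F → R` with differential the contraction with `s` is exact except in
degree `0`, where its cohomology is `R/(im s)`.  Equivalently (since the differential is
homogeneous of degree `-1`): every cycle is the sum of a boundary and a scalar
(exactness away from degree `0`), and a scalar `r ∈ R = Λ⁰F` is a boundary exactly when
`r ∈ (s(e₁), …, s(e_n))` (so `H⁰ = R/(im s)`). -/
theorem koszul_complex_exact_of_regular_sequence
    (R F : Type*) [CommRing R] [AddCommGroup F] [Module R F]
    (n : ℕ) (b : Module.Basis (Fin n) R F) (s : Module.Dual R F)
    (hreg : RingTheory.Sequence.IsRegular R (List.ofFn fun i => s (b i))) :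
    LinearMap.ker (koszulContraction R F s) =
      LinearMap.range (koszulContraction R F s) ⊔
        LinearMap.range (Algebra.linearMap R (ExteriorAlgebra R F)) ∧
    (∀ r : R, algebraMap R (ExteriorAlgebra R F) r ∈
        LinearMap.range (koszulContraction R F s) ↔
      r ∈ Ideal.span (Set.range fun i => s (b i))) := by
  constructor
  · apply le_antisymm
    · exact KoszulAux.koszul_ker_le n b s hreg
    · apply sup_le
      · rintro _ ⟨y, rfl⟩
        exact LinearMap.mem_ker.mpr (KoszulAux.kc_kc s y)
      · rintro _ ⟨r, rfl⟩
        exact LinearMap.mem_ker.mpr (KoszulAux.kc_algebraMap s r)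
  · intro r
    rw [KoszulAux.algebraMap_mem_range_kc_iff s r, KoszulAux.range_dual_eq_span b s]

end
end
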